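/- Under the Markov assumption X_S − X_0 − (X_T, Z) for all disjoint S,T ⊆ L, where Z is an eavesdropper variable, the value function v^Z(S) = I(X_S; X_0 | X_{L\S}, Z) is supermodular, and its core equals {(R_l)_{l∈L} : for all S ⊆ L, I(X_S; X_0 | X_{L\S}, Z) ≤ Σ_{i∈S} R_i ≤ I(X_S; X_0 | Z)}. -/

import Mathlib

noncomputable section
open Finset
open scoped Classical BigOperators

/-- Probability of an event under a pmf on a finite sample space. -/
def Pr {Ω : Type} [Fintype Ω] (p : Ω → ℝ) (E : Ω → Prop) : ℝ :=
  ∑ ω : Ω, if E ω then p ω else 0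

/-- `p` is a probability mass function. -/
def IsPMF {Ω : Type} [Fintype Ω] (p : Ω → ℝ) : Prop :=
  (∀ ω, 0 ≤ p ω) ∧ (∑ ω : Ω, p ω) = 1

/-- Shannon entropy of a finitely-valued random variable `X` under pmf `p`. -/
def ent {Ω α : Type} [Fintype Ω] [Fintype α] (p : Ω → ℝ) (X : Ω → α) : ℝ :=
  -∑ a : α, Pr p (fun ω => X ω = a) * Real.log (Pr p (fun ω => X ω = a))

/-- Conditional Shannon entropy `H(X|Y)`. -/
def condEnt {Ω α β : Type} [Fintype Ω] [Fintype α] [Fintype β]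
    (p : Ω → ℝ) (X : Ω → α) (Y : Ω → β) : ℝ :=
  ent p (fun ω => (X ω, Y ω)) - ent p Y

/-- Mutual information `I(X;Y)`. -/
def mi {Ω α β : Type} [Fintype Ω] [Fintype α] [Fintype β]
    (p : Ω → ℝ) (X : Ω → α) (Y : Ω → β) : ℝ :=
  ent p X + ent p Y - ent p (fun ω => (X ω, Y ω))

/-- Conditional mutual information `I(X;Y|Z)`. -/
def cmi {Ω α β γ : Type} [Fintype Ω] [Fintype α] [Fintype β] [Fintype γ]
    (p : Ω → ℝ) (X : Ω → α) (Y : Ω → β) (Z : Ω → γ) : ℝ :=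
  ent p (fun ω => (X ω, Z ω)) + ent p (fun ω => (Y ω, Z ω))
    - ent p (fun ω => (X ω, Y ω, Z ω)) - ent p Z

/-- `X` and `Y` are conditionally independent given `Z` (Markov chain `X - Z - Y`). -/
def CondIndep {Ω α β γ : Type} [Fintype Ω] [Fintype α] [Fintype β] [Fintype γ]
    (p : Ω → ℝ) (X : Ω → α) (Y : Ω → β) (Z : Ω → γ) : Prop :=
  ∀ (a : α) (b : β) (c : γ),
    Pr p (fun ω => X ω = a ∧ Y ω = b ∧ Z ω = c) * Pr p (fun ω => Z ω = c)
      = Pr p (fun ω => X ω = a ∧ Z ω = c) * Pr p (fun ω => Y ω = b ∧ Z ω = c)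

/-- The tuple random variable `X_S = (X_l)_{l ∈ S}`. -/
def XS {Ω L 𝒳 : Type} [Fintype Ω] (X : L → Ω → 𝒳) (S : Finset L) :
    Ω → (S → 𝒳) :=
  fun ω i => X i ω

/-- The value function of the secret-key generation game:
`v(S) = I(X_S; X_0 | X_{L\S})`. -/
def vGame {Ω L 𝒳 β : Type} [Fintype Ω] [Fintype L] [DecidableEq L] [Fintype 𝒳] [Fintype β]
    (p : Ω → ℝ) (X : L → Ω → 𝒳) (X0 : Ω → β) (S : Finset L) : ℝ :=
  cmi p (XS X S) X0 (XS X Sᶜ)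


/-- The value function with an eavesdropper observing `Z`:
`v^Z(S) = I(X_S; X_0 | X_{L\S}, Z)`. -/
def vZGame {Ω L 𝒳 β 𝒵 : Type} [Fintype Ω] [Fintype L] [DecidableEq L] [Fintype 𝒳] [Fintype β]
    [Fintype 𝒵] (p : Ω → ℝ) (X : L → Ω → 𝒳) (X0 : Ω → β) (Z : Ω → 𝒵) (S : Finset L) : ℝ :=
  cmi p (XS X S) X0 (fun ω => (XS X Sᶜ ω, Z ω))

section Infra
variable {Ω : Type} [Fintype Ω] {p : Ω → ℝ}

lemma Pr_congr {E F : Ω → Prop} (h : ∀ ω, E ω ↔ F ω) : Pr p E = Pr p F :=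
  Finset.sum_congr rfl fun ω _ => by simp only [h ω]

lemma Pr_nonneg (hp : ∀ ω, 0 ≤ p ω) (E : Ω → Prop) : 0 ≤ Pr p E :=
  Finset.sum_nonneg fun ω _ => by split <;> simp [hp ω]

lemma Pr_mono (hp : ∀ ω, 0 ≤ p ω) {E F : Ω → Prop} (h : ∀ ω, E ω → F ω) :
    Pr p E ≤ Pr p F := by
  refine Finset.sum_le_sum fun ω _ => ?_
  by_cases hE : E ω
  · rw [if_pos hE, if_pos (h ω hE)]
  · rw [if_neg hE]; split <;> simp [hp ω]

lemma Pr_split {β : Type} [Fintype β] (B : Ω → β) (E : Ω → Prop) :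
    Pr p E = ∑ b : β, Pr p (fun ω => E ω ∧ B ω = b) := by
  unfold Pr
  rw [Finset.sum_comm]
  refine Finset.sum_congr rfl fun ω _ => ?_
  by_cases hE : E ω
  · simp [hE]
  · simp [hE]

lemma Pr_total (hp : IsPMF p) : Pr p (fun _ => True) = 1 := by
  simpa [Pr] using hp.2

lemma ent_comp {α β : Type} [Fintype α] [Fintype β] (W : Ω → α) {g : α → β}
    (hg : Function.Injective g) : ent p (fun ω => g (W ω)) = ent p W := by
  unfold ent
  congr 1
  have h1 : ∀ b ∈ Finset.univ, b ∉ Finset.univ.image g →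
      Pr p (fun ω => g (W ω) = b) * Real.log (Pr p (fun ω => g (W ω) = b)) = 0 := by
    intro b _ hb
    have h0 : Pr p (fun ω => g (W ω) = b) = 0 := by
      refine Finset.sum_eq_zero fun ω _ => ?_
      rw [if_neg]
      intro h; exact hb (Finset.mem_image.2 ⟨W ω, Finset.mem_univ _, h⟩)
    simp [h0]
  rw [← Finset.sum_subset (Finset.subset_univ (Finset.univ.image g)) h1,
    Finset.sum_image (fun a _ b _ h => hg h)]
  refine Finset.sum_congr rfl fun a _ => ?_
  have : Pr p (fun ω => g (W ω) = g a) = Pr p (fun ω => W ω = a) :=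
    Pr_congr fun ω => hg.eq_iff
  rw [this]

end Infra

section Triple
set_option linter.unusedSectionVars false

lemma sum3_comm12 {α β γ : Type} [Fintype α] [Fintype β] [Fintype γ] (f : α → β → γ → ℝ) :
    ∑ a : α, ∑ b : β, ∑ c : γ, f a b c = ∑ b : β, ∑ a : α, ∑ c : γ, f a b c :=
  Finset.sum_comm

lemma sum3_comm23 {α β γ : Type} [Fintype α] [Fintype β] [Fintype γ] (f : α → β → γ → ℝ) :
    ∑ a : α, ∑ b : β, ∑ c : γ, f a b c = ∑ a : α, ∑ c : γ, ∑ b : β, f a b c :=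
  Finset.sum_congr rfl fun _ _ => Finset.sum_comm
variable {Ω α β γ : Type} [Fintype Ω] [Fintype α] [Fintype β] [Fintype γ]

/-- joint distribution of three random variables -/
def q3 (p : Ω → ℝ) (A : Ω → α) (B : Ω → β) (C : Ω → γ) (a : α) (b : β) (c : γ) : ℝ :=
  Pr p (fun ω => A ω = a ∧ B ω = b ∧ C ω = c)

variable {p : Ω → ℝ} (A : Ω → α) (B : Ω → β) (C : Ω → γ)

lemma q3_nonneg (hp : ∀ ω, 0 ≤ p ω) (a b c) : 0 ≤ q3 p A B C a b c :=
  Pr_nonneg hp _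

lemma margAC (a c) : Pr p (fun ω => A ω = a ∧ C ω = c) = ∑ b : β, q3 p A B C a b c := by
  rw [Pr_split B]
  exact Finset.sum_congr rfl fun b _ => Pr_congr (by tauto)

lemma margBC (b c) : Pr p (fun ω => B ω = b ∧ C ω = c) = ∑ a : α, q3 p A B C a b c := by
  rw [Pr_split A]
  exact Finset.sum_congr rfl fun a _ => Pr_congr (by tauto)

lemma margC (c) : Pr p (fun ω => C ω = c) = ∑ a : α, ∑ b : β, q3 p A B C a b c := by
  rw [Pr_split A]
  refine Finset.sum_congr rfl fun a _ => ?_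
  rw [Pr_split B]
  exact Finset.sum_congr rfl fun b _ => Pr_congr (by tauto)

lemma entABC_eq : ent p (fun ω => (A ω, B ω, C ω)) =
    -∑ a : α, ∑ b : β, ∑ c : γ, q3 p A B C a b c * Real.log (q3 p A B C a b c) := by
  unfold ent
  rw [Fintype.sum_prod_type]
  congr 1
  refine Finset.sum_congr rfl fun a _ => ?_
  rw [Fintype.sum_prod_type]
  refine Finset.sum_congr rfl fun b _ => Finset.sum_congr rfl fun c _ => ?_
  have : Pr p (fun ω => (A ω, B ω, C ω) = (a, b, c)) = q3 p A B C a b c :=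
    Pr_congr fun ω => by simp [Prod.ext_iff]
  rw [this]

lemma entAC_eq : ent p (fun ω => (A ω, C ω)) =
    -∑ a : α, ∑ b : β, ∑ c : γ,
      q3 p A B C a b c * Real.log (∑ b' : β, q3 p A B C a b' c) := by
  unfold ent
  rw [Fintype.sum_prod_type]
  congr 1
  refine Finset.sum_congr rfl fun a _ => ?_
  rw [Finset.sum_comm]
  refine Finset.sum_congr rfl fun c _ => ?_
  have h1 : Pr p (fun ω => (A ω, C ω) = (a, c)) = Pr p (fun ω => A ω = a ∧ C ω = c) :=
    Pr_congr fun ω => by simp [Prod.ext_iff]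
  rw [h1, margAC A B C a c, Finset.sum_mul]

lemma entBC_eq : ent p (fun ω => (B ω, C ω)) =
    -∑ a : α, ∑ b : β, ∑ c : γ,
      q3 p A B C a b c * Real.log (∑ a' : α, q3 p A B C a' b c) := by
  have hr : (∑ a : α, ∑ b : β, ∑ c : γ,
        q3 p A B C a b c * Real.log (∑ a' : α, q3 p A B C a' b c))
      = ∑ b : β, ∑ c : γ, ∑ a : α,
        q3 p A B C a b c * Real.log (∑ a' : α, q3 p A B C a' b c) := by
    rw [sum3_comm12]
    exact Finset.sum_congr rfl fun b _ => Finset.sum_comm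
  rw [hr]
  unfold ent
  rw [Fintype.sum_prod_type]
  congr 1
  refine Finset.sum_congr rfl fun b _ => Finset.sum_congr rfl fun c _ => ?_
  have h1 : Pr p (fun ω => (B ω, C ω) = (b, c)) = Pr p (fun ω => B ω = b ∧ C ω = c) :=
    Pr_congr fun ω => by simp [Prod.ext_iff]
  rw [h1, margBC A B C b c, Finset.sum_mul]

lemma entC_eq : ent p C =
    -∑ a : α, ∑ b : β, ∑ c : γ,
      q3 p A B C a b c * Real.log (∑ a' : α, ∑ b' : β, q3 p A B C a' b' c) := by
  have hr : (∑ a : α, ∑ b : β, ∑ c : γ,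
        q3 p A B C a b c * Real.log (∑ a' : α, ∑ b' : β, q3 p A B C a' b' c))
      = ∑ c : γ, ∑ a : α, ∑ b : β,
        q3 p A B C a b c * Real.log (∑ a' : α, ∑ b' : β, q3 p A B C a' b' c) := by
    rw [sum3_comm23]
    rw [sum3_comm12 (fun a c b => q3 p A B C a b c * Real.log (∑ a' : α, ∑ b' : β, q3 p A B C a' b' c))]
  rw [hr]
  unfold ent
  congr 1
  refine Finset.sum_congr rfl fun c _ => ?_
  rw [margC A B C c, Finset.sum_mul]
  exact Finset.sum_congr rfl fun a _ => Finset.sum_mul _ _ _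

lemma cmi_eq_sum : cmi p A B C =
    ∑ a : α, ∑ b : β, ∑ c : γ, q3 p A B C a b c *
      (Real.log (q3 p A B C a b c) + Real.log (∑ a' : α, ∑ b' : β, q3 p A B C a' b' c)
        - Real.log (∑ b' : β, q3 p A B C a b' c) - Real.log (∑ a' : α, q3 p A B C a' b c)) := by
  rw [cmi, entABC_eq A B C, entAC_eq A B C, entBC_eq A B C, entC_eq A B C]
  simp only [← Finset.sum_neg_distrib, ← Finset.sum_add_distrib, ← Finset.sum_sub_distrib]
  refine Finset.sum_congr rfl fun a _ => Finset.sum_congr rfl fun b _ =>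
    Finset.sum_congr rfl fun c _ => by ring

end Triple

section NonnegZero
set_option linter.unusedSectionVars false

lemma sum3_rot {α β γ : Type} [Fintype α] [Fintype β] [Fintype γ] (f : α → β → γ → ℝ) :
    ∑ a : α, ∑ b : β, ∑ c : γ, f a b c = ∑ c : γ, ∑ a : α, ∑ b : β, f a b c := by
  rw [sum3_comm23 f, sum3_comm12 (fun a c b => f a b c)]

lemma key_ineq {q qac qbc qc : ℝ} (hq : 0 ≤ q) (h1 : q ≤ qac) (h2 : q ≤ qbc) (h3 : qbc ≤ qc) :
    q - qac * qbc / qc ≤ q * (Real.log q + Real.log qc - Real.log qac - Real.log qbc) := by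
  rcases eq_or_lt_of_le hq with hq0 | hq0
  · have : 0 ≤ qac * qbc / qc := by
      apply div_nonneg (mul_nonneg (hq0 ▸ h1) (hq0 ▸ h2)) (le_trans (hq0 ▸ h2) h3)
    rw [← hq0]
    simpa using this
  · have hqac : 0 < qac := lt_of_lt_of_le hq0 h1
    have hqbc : 0 < qbc := lt_of_lt_of_le hq0 h2
    have hqc : 0 < qc := lt_of_lt_of_le hqbc h3
    have hm : 0 < qac * qbc / qc := div_pos (mul_pos hqac hqbc) hqc
    have hlog : Real.log (qac * qbc / qc / q) ≤ qac * qbc / qc / q - 1 :=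
      Real.log_le_sub_one_of_pos (div_pos hm hq0)
    have hexp : Real.log (qac * qbc / qc / q)
        = Real.log qac + Real.log qbc - Real.log qc - Real.log q := by
      rw [Real.log_div (ne_of_gt hm) (ne_of_gt hq0),
        Real.log_div (ne_of_gt (mul_pos hqac hqbc)) (ne_of_gt hqc),
        Real.log_mul (ne_of_gt hqac) (ne_of_gt hqbc)]
    rw [hexp] at hlog
    have h4 := mul_le_mul_of_nonneg_left hlog (le_of_lt hq0)
    have h5 : q * (qac * qbc / qc / q - 1) = qac * qbc / qc - q := by
      field_simp
    rw [h5] at h4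
    nlinarith [h4]

variable {Ω α β γ : Type} [Fintype Ω] [Fintype α] [Fintype β] [Fintype γ]
variable {p : Ω → ℝ} (A : Ω → α) (B : Ω → β) (C : Ω → γ)

lemma sum_q3_eq_one (hp : IsPMF p) :
    ∑ a : α, ∑ b : β, ∑ c : γ, q3 p A B C a b c = 1 := by
  rw [sum3_rot]
  have h1 : Pr p (fun _ : Ω => True) = ∑ c : γ, Pr p (fun ω => C ω = c) := by
    rw [Pr_split C (fun _ => True)]
    exact Finset.sum_congr rfl fun c _ => Pr_congr fun ω => by tauto
  have h2 := (Pr_total hp).symm.trans h1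
  refine Eq.trans ?_ h2.symm
  exact Finset.sum_congr rfl fun c _ => (margC A B C c).symm

lemma cmi_nonneg (hp : IsPMF p) : 0 ≤ cmi p A B C := by
  rw [cmi_eq_sum A B C]
  have hqnn : ∀ a b c, 0 ≤ q3 p A B C a b c := fun a b c => q3_nonneg A B C hp.1 a b c
  have hsum1 : ∑ a : α, ∑ b : β, ∑ c : γ, q3 p A B C a b c = 1 := sum_q3_eq_one A B C hp
  have hmsum : ∑ a : α, ∑ b : β, ∑ c : γ,
      (∑ b' : β, q3 p A B C a b' c) * (∑ a' : α, q3 p A B C a' b c)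
        / (∑ a' : α, ∑ b' : β, q3 p A B C a' b' c) = 1 := by
    rw [sum3_rot]
    have hper : ∀ c : γ, (∑ a : α, ∑ b : β,
        (∑ b' : β, q3 p A B C a b' c) * (∑ a' : α, q3 p A B C a' b c)
          / (∑ a' : α, ∑ b' : β, q3 p A B C a' b' c))
        = ∑ a' : α, ∑ b' : β, q3 p A B C a' b' c := by
      intro c
      have step : ∀ a : α, (∑ b : β,
          (∑ b' : β, q3 p A B C a b' c) * (∑ a' : α, q3 p A B C a' b c)
            / (∑ a' : α, ∑ b' : β, q3 p A B C a' b' c))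
          = (∑ b' : β, q3 p A B C a b' c) * (∑ b : β, ∑ a' : α, q3 p A B C a' b c)
            / (∑ a' : α, ∑ b' : β, q3 p A B C a' b' c) := by
        intro a
        rw [← Finset.sum_div, ← Finset.mul_sum]
      rw [Finset.sum_congr rfl fun a _ => step a, ← Finset.sum_div, ← Finset.sum_mul]
      have e1 : (∑ b : β, ∑ a' : α, q3 p A B C a' b c)
          = ∑ a' : α, ∑ b' : β, q3 p A B C a' b' c := Finset.sum_comm
      rw [e1]
      rcases eq_or_lt_of_le (Finset.sum_nonneg fun a' _ => Finset.sum_nonneg fun b' _ => hqnn a' b' c)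
        with h0 | h0
      · rw [← h0]; simp
      · field_simp
    rw [Finset.sum_congr rfl fun c _ => hper c]
    have := sum_q3_eq_one A B C hp
    rw [sum3_rot] at this
    exact this
  have key : ∀ a b c, q3 p A B C a b c
        - (∑ b' : β, q3 p A B C a b' c) * (∑ a' : α, q3 p A B C a' b c)
          / (∑ a' : α, ∑ b' : β, q3 p A B C a' b' c)
      ≤ q3 p A B C a b c *
        (Real.log (q3 p A B C a b c) + Real.log (∑ a' : α, ∑ b' : β, q3 p A B C a' b' c)
          - Real.log (∑ b' : β, q3 p A B C a b' c) - Real.log (∑ a' : α, q3 p A B C a' b c)) := by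
    intro a b c
    refine key_ineq (hqnn a b c) ?_ ?_ ?_
    · exact Finset.single_le_sum (fun b' _ => hqnn a b' c) (Finset.mem_univ b)
    · exact Finset.single_le_sum (fun a' _ => hqnn a' b c) (Finset.mem_univ a)
    · exact Finset.sum_le_sum fun a' _ =>
        Finset.single_le_sum (fun b' _ => hqnn a' b' c) (Finset.mem_univ b)
  calc (0:ℝ) = (∑ a : α, ∑ b : β, ∑ c : γ, q3 p A B C a b c)
      - (∑ a : α, ∑ b : β, ∑ c : γ,
        (∑ b' : β, q3 p A B C a b' c) * (∑ a' : α, q3 p A B C a' b c)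
          / (∑ a' : α, ∑ b' : β, q3 p A B C a' b' c)) := by rw [hsum1, hmsum]; ring
    _ = ∑ a : α, ∑ b : β, ∑ c : γ, (q3 p A B C a b c
        - (∑ b' : β, q3 p A B C a b' c) * (∑ a' : α, q3 p A B C a' b c)
          / (∑ a' : α, ∑ b' : β, q3 p A B C a' b' c)) := by
        simp only [← Finset.sum_sub_distrib]
    _ ≤ _ := Finset.sum_le_sum fun a _ => Finset.sum_le_sum fun b _ =>
        Finset.sum_le_sum fun c _ => key a b c

lemma cmi_eq_zero (hp : ∀ ω, 0 ≤ p ω) (h : CondIndep p A B C) : cmi p A B C = 0 := by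
  rw [cmi_eq_sum A B C]
  refine Finset.sum_eq_zero fun a _ => Finset.sum_eq_zero fun b _ => Finset.sum_eq_zero fun c _ => ?_
  have hq := q3_nonneg A B C hp a b c
  rcases eq_or_lt_of_le hq with hq0 | hq0
  · rw [← hq0]; ring
  · have hfac := h a b c
    rw [margC A B C c, margAC A B C a c, margBC A B C b c] at hfac
    have hqac : 0 < ∑ b' : β, q3 p A B C a b' c :=
      lt_of_lt_of_le hq0 (Finset.single_le_sum (fun b' _ => q3_nonneg A B C hp a b' c) (Finset.mem_univ b))
    have hqbc : 0 < ∑ a' : α, q3 p A B C a' b c :=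
      lt_of_lt_of_le hq0 (Finset.single_le_sum (fun a' _ => q3_nonneg A B C hp a' b c) (Finset.mem_univ a))
    have hqc : 0 < ∑ a' : α, ∑ b' : β, q3 p A B C a' b' c := by
      refine lt_of_lt_of_le hqbc (Finset.sum_le_sum fun a' _ => ?_)
      exact Finset.single_le_sum (fun b' _ => q3_nonneg A B C hp a' b' c) (Finset.mem_univ b)
    have e1 : Real.log (q3 p A B C a b c * (∑ a' : α, ∑ b' : β, q3 p A B C a' b' c))
        = Real.log (q3 p A B C a b c) + Real.log (∑ a' : α, ∑ b' : β, q3 p A B C a' b' c) :=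
      Real.log_mul (ne_of_gt hq0) (ne_of_gt hqc)
    have e2 : Real.log ((∑ b' : β, q3 p A B C a b' c) * ∑ a' : α, q3 p A B C a' b c)
        = Real.log (∑ b' : β, q3 p A B C a b' c) + Real.log (∑ a' : α, q3 p A B C a' b c) :=
      Real.log_mul (ne_of_gt hqac) (ne_of_gt hqbc)
    have : q3 p A B C a b c * (∑ a' : α, ∑ b' : β, q3 p A B C a' b' c)
        = (∑ b' : β, q3 p A B C a b' c) * ∑ a' : α, q3 p A B C a' b c := by
      exact hfac
    rw [this] at e1
    rw [e2] at e1
    have : Real.log (q3 p A B C a b c) + Real.log (∑ a' : α, ∑ b' : β, q3 p A B C a' b' c)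
        - Real.log (∑ b' : β, q3 p A B C a b' c) - Real.log (∑ a' : α, q3 p A B C a' b c) = 0 := by
      linarith
    rw [this, mul_zero]

end NonnegZero

section Relabel
set_option linter.unusedSectionVars false
variable {Ω : Type} [Fintype Ω] {p : Ω → ℝ}

lemma ent_eq_of {α β : Type} [Fintype α] [Fintype β] (W : Ω → α) {g : α → β}
    (hg : Function.Injective g) (V : Ω → β) (h : ∀ ω, V ω = g (W ω)) :
    ent p V = ent p W := by
  have : V = fun ω => g (W ω) := funext h
  rw [this]
  exact ent_comp W hg

lemma ent_swap {α β : Type} [Fintype α] [Fintype β] (U : Ω → α) (V : Ω → β) :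
    ent p (fun ω => (U ω, V ω)) = ent p (fun ω => (V ω, U ω)) :=
  ent_eq_of (fun ω => (V ω, U ω)) Prod.swap_injective _ (fun _ => rfl)

lemma ent_swap23 {α β γ : Type} [Fintype α] [Fintype β] [Fintype γ]
    (U : Ω → α) (V : Ω → β) (W : Ω → γ) :
    ent p (fun ω => (U ω, V ω, W ω)) = ent p (fun ω => (U ω, W ω, V ω)) := by
  refine ent_eq_of (fun ω => (U ω, W ω, V ω)) (g := fun x => (x.1, x.2.2, x.2.1)) ?_ _ (fun _ => rfl)
  intro x y h
  simp only [Prod.mk.injEq] at h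
  exact Prod.ext h.1 (Prod.ext h.2.2 h.2.1)

lemma condIndep_pair_left {α β1 β2 γ : Type} [Fintype α] [Fintype β1] [Fintype β2] [Fintype γ]
    {A : Ω → α} {B1 : Ω → β1} {B2 : Ω → β2} {C : Ω → γ}
    (h : CondIndep p A (fun ω => (B1 ω, B2 ω)) C) : CondIndep p A B2 C := by
  intro a b c
  have k1 : Pr p (fun ω => A ω = a ∧ B2 ω = b ∧ C ω = c)
      = ∑ b1 : β1, Pr p (fun ω => A ω = a ∧ (B1 ω, B2 ω) = (b1, b) ∧ C ω = c) := by
    rw [Pr_split B1]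
    exact Finset.sum_congr rfl fun b1 _ => Pr_congr fun ω => by
      simp only [Prod.mk.injEq]; tauto
  have k2 : Pr p (fun ω => B2 ω = b ∧ C ω = c)
      = ∑ b1 : β1, Pr p (fun ω => (B1 ω, B2 ω) = (b1, b) ∧ C ω = c) := by
    rw [Pr_split B1]
    exact Finset.sum_congr rfl fun b1 _ => Pr_congr fun ω => by
      simp only [Prod.mk.injEq]; tauto
  rw [k1, k2, Finset.sum_mul, Finset.mul_sum]
  exact Finset.sum_congr rfl fun b1 _ => h a (b1, b) c

lemma condIndep_pair_right {α β1 β2 γ : Type} [Fintype α] [Fintype β1] [Fintype β2] [Fintype γ]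
    {A : Ω → α} {B1 : Ω → β1} {B2 : Ω → β2} {C : Ω → γ}
    (h : CondIndep p A (fun ω => (B1 ω, B2 ω)) C) : CondIndep p A B1 C := by
  intro a b c
  have k1 : Pr p (fun ω => A ω = a ∧ B1 ω = b ∧ C ω = c)
      = ∑ b2 : β2, Pr p (fun ω => A ω = a ∧ (B1 ω, B2 ω) = (b, b2) ∧ C ω = c) := by
    rw [Pr_split B2]
    exact Finset.sum_congr rfl fun b2 _ => Pr_congr fun ω => by
      simp only [Prod.mk.injEq]; tauto
  have k2 : Pr p (fun ω => B1 ω = b ∧ C ω = c)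
      = ∑ b2 : β2, Pr p (fun ω => (B1 ω, B2 ω) = (b, b2) ∧ C ω = c) := by
    rw [Pr_split B2]
    exact Finset.sum_congr rfl fun b2 _ => Pr_congr fun ω => by
      simp only [Prod.mk.injEq]; tauto
  rw [k1, k2, Finset.sum_mul, Finset.mul_sum]
  exact Finset.sum_congr rfl fun b2 _ => h a (b, b2) c

/-- `I(A;D|B,C) = H(A,B,C) - H(B,C) - H(A,D) + H(D)` when `A ⫫ (B,C) | D`. -/
lemma formulaA_gen {α β γ δ : Type} [Fintype α] [Fintype β] [Fintype γ] [Fintype δ]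
    (hp : ∀ ω, 0 ≤ p ω) (A : Ω → α) (B : Ω → β) (C : Ω → γ) (D : Ω → δ)
    (hCI : CondIndep p A (fun ω => (B ω, C ω)) D) :
    cmi p A D (fun ω => (B ω, C ω))
      = ent p (fun ω => (A ω, B ω, C ω)) - ent p (fun ω => (B ω, C ω))
        - ent p (fun ω => (A ω, D ω)) + ent p D := by
  have h0 := cmi_eq_zero A (fun ω => (B ω, C ω)) D hp hCI
  unfold cmi at h0 ⊢
  have r1 : ent p (fun ω => ((B ω, C ω), D ω)) = ent p (fun ω => (D ω, B ω, C ω)) :=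
    ent_swap _ _
  have r2 : ent p (fun ω => (A ω, (B ω, C ω), D ω)) = ent p (fun ω => (A ω, D ω, B ω, C ω)) :=
    ent_swap23 _ _ _
  rw [r1, r2] at h0
  linarith

/-- `I(A;D|C) = H(A,C) - H(C) - H(A,D) + H(D)` when `A ⫫ C | D`. -/
lemma formulaB_gen {α γ δ : Type} [Fintype α] [Fintype γ] [Fintype δ]
    (hp : ∀ ω, 0 ≤ p ω) (A : Ω → α) (C : Ω → γ) (D : Ω → δ)
    (hCI : CondIndep p A C D) :
    cmi p A D C
      = ent p (fun ω => (A ω, C ω)) - ent p C - ent p (fun ω => (A ω, D ω)) + ent p D := by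
  have h0 := cmi_eq_zero A C D hp hCI
  unfold cmi at h0 ⊢
  have r1 : ent p (fun ω => (C ω, D ω)) = ent p (fun ω => (D ω, C ω)) := ent_swap _ _
  have r2 : ent p (fun ω => (A ω, C ω, D ω)) = ent p (fun ω => (A ω, D ω, C ω)) :=
    ent_swap23 _ _ _
  rw [r1, r2] at h0
  linarith

end Relabel

section XSLemmas
set_option linter.unusedSectionVars false
variable {Ω L 𝒳 γ : Type} [Fintype Ω] [Fintype L] [DecidableEq L] [Fintype 𝒳] [Fintype γ]
variable {p : Ω → ℝ} (X : L → Ω → 𝒳)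

lemma ent_XS_union (M N : Finset L) (W : Ω → γ) :
    ent p (fun ω => (XS X (M ∪ N) ω, W ω))
      = ent p (fun ω => (XS X M ω, XS X N ω, W ω)) := by
  refine (ent_eq_of (fun ω => (XS X (M ∪ N) ω, W ω))
    (g := fun x => ((fun i => x.1 ⟨i.1, Finset.mem_union_left N i.2⟩ : M → 𝒳),
      (fun i => x.1 ⟨i.1, Finset.mem_union_right M i.2⟩ : N → 𝒳), x.2)) ?_ _ (fun _ => rfl)).symm
  intro x y h
  simp only [Prod.mk.injEq] at h
  refine Prod.ext ?_ h.2.2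
  funext j
  rcases Finset.mem_union.1 j.2 with hj | hj
  · exact congrFun h.1 ⟨j.1, hj⟩
  · exact congrFun h.2.1 ⟨j.1, hj⟩

lemma ent_XS_empty (W : Ω → γ) :
    ent p (fun ω => (XS X ∅ ω, W ω)) = ent p W := by
  refine ent_eq_of W
    (g := fun w => ((fun i => absurd i.2 (Finset.notMem_empty i.1) : (∅ : Finset L) → 𝒳), w))
    ?_ _ (fun ω => ?_)
  · intro x y h
    simpa using congrArg Prod.snd h
  · refine Prod.ext ?_ rfl
    funext i
    exact absurd i.2 (Finset.notMem_empty i.1)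

lemma ent_XS_submod (hp : IsPMF p) (M N : Finset L) (W : Ω → γ) :
    ent p (fun ω => (XS X (M ∪ N) ω, W ω)) + ent p (fun ω => (XS X (M ∩ N) ω, W ω))
      ≤ ent p (fun ω => (XS X M ω, W ω)) + ent p (fun ω => (XS X N ω, W ω)) := by
  have h := cmi_nonneg (XS X (M \ N)) (XS X (N \ M)) (fun ω => (XS X (M ∩ N) ω, W ω)) hp
  unfold cmi at h
  have e1 : ent p (fun ω => (XS X (M \ N) ω, XS X (M ∩ N) ω, W ω))
      = ent p (fun ω => (XS X M ω, W ω)) := by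
    rw [← ent_XS_union X (M \ N) (M ∩ N) W, Finset.sdiff_union_inter]
  have e2 : ent p (fun ω => (XS X (N \ M) ω, XS X (M ∩ N) ω, W ω))
      = ent p (fun ω => (XS X N ω, W ω)) := by
    rw [← ent_XS_union X (N \ M) (M ∩ N) W, Finset.inter_comm, Finset.sdiff_union_inter]
  have e3 : ent p (fun ω => (XS X (M \ N) ω, XS X (N \ M) ω, XS X (M ∩ N) ω, W ω))
      = ent p (fun ω => (XS X (M ∪ N) ω, W ω)) := by
    have hset : M \ N ∪ N \ M ∪ M ∩ N = M ∪ N := by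
      ext x
      simp only [Finset.mem_union, Finset.mem_sdiff, Finset.mem_inter]
      tauto
    rw [← ent_XS_union X (M \ N) (N \ M) (fun ω => (XS X (M ∩ N) ω, W ω)),
      ← ent_XS_union X (M \ N ∪ N \ M) (M ∩ N) W, hset]
  rw [e1, e2, e3] at h
  linarith

end XSLemmas

section Main
set_option linter.unusedSectionVars false
variable {Ω L 𝒳 β 𝒵 : Type} [Fintype Ω] [Fintype L] [DecidableEq L] [Fintype 𝒳]
    [Fintype β] [Fintype 𝒵]
variable (p : Ω → ℝ) (X : L → Ω → 𝒳) (X0 : Ω → β) (Z : Ω → 𝒵)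

lemma vZ_formula (hp : ∀ ω, 0 ≤ p ω)
    (hM : ∀ S T : Finset L, Disjoint S T →
      CondIndep p (XS X S) (fun ω => (XS X T ω, Z ω)) X0) (S : Finset L) :
    vZGame p X X0 Z S
      = ent p (fun ω => (XS X Finset.univ ω, Z ω)) - ent p (fun ω => (XS X Sᶜ ω, Z ω))
        - ent p (fun ω => (XS X S ω, X0 ω)) + ent p X0 := by
  have hCI := hM S Sᶜ disjoint_compl_right
  have h := formulaA_gen hp (XS X S) (XS X Sᶜ) Z X0 hCI
  unfold vZGame
  rw [h, ← ent_XS_union X S Sᶜ Z, Finset.union_compl]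

lemma cmi_Z_formula (hp : ∀ ω, 0 ≤ p ω)
    (hM : ∀ S T : Finset L, Disjoint S T →
      CondIndep p (XS X S) (fun ω => (XS X T ω, Z ω)) X0) (S : Finset L) :
    cmi p (XS X S) X0 Z
      = ent p (fun ω => (XS X S ω, Z ω)) - ent p Z
        - ent p (fun ω => (XS X S ω, X0 ω)) + ent p X0 :=
  formulaB_gen hp (XS X S) Z X0 (condIndep_pair_left (hM S ∅ (Finset.disjoint_empty_right S)))

lemma I2_formula (hp : ∀ ω, 0 ≤ p ω)
    (hM : ∀ S T : Finset L, Disjoint S T →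
      CondIndep p (XS X S) (fun ω => (XS X T ω, Z ω)) X0) (S : Finset L) :
    ent p (fun ω => (XS X Finset.univ ω, X0 ω))
      = ent p (fun ω => (XS X S ω, X0 ω)) + ent p (fun ω => (XS X Sᶜ ω, X0 ω)) - ent p X0 := by
  have hCI : CondIndep p (XS X S) (XS X Sᶜ) X0 :=
    condIndep_pair_right (hM S Sᶜ disjoint_compl_right)
  have h0 := cmi_eq_zero (XS X S) (XS X Sᶜ) X0 hp hCI
  unfold cmi at h0
  rw [← ent_XS_union X S Sᶜ X0, Finset.union_compl] at h0
  linarith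

end Main

/-- under the Markov assumption `X_S - X_0 - (X_T, Z)`, the value function
`v^Z(S) = I(X_S;X_0|X_{L\S},Z)` is supermodular, and its core equals
`{(R_l) : ∀ S, I(X_S;X_0|X_{L\S},Z) ≤ Σ_S R ≤ I(X_S;X_0|Z)}`. -/
theorem statement17 {Ω L 𝒳 β 𝒵 : Type} [Fintype Ω] [Fintype L] [DecidableEq L] [Fintype 𝒳]
    [Fintype β] [Fintype 𝒵]
    (p : Ω → ℝ) (hp : IsPMF p) (X : L → Ω → 𝒳) (X0 : Ω → β) (Z : Ω → 𝒵)
    (hM : ∀ S T : Finset L, Disjoint S T →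
      CondIndep p (XS X S) (fun ω => (XS X T ω, Z ω)) X0) :
    (∀ U V : Finset L,
        vZGame p X X0 Z U + vZGame p X X0 Z V
          ≤ vZGame p X X0 Z (U ∪ V) + vZGame p X X0 Z (U ∩ V)) ∧
    (∀ R : L → ℝ,
      ((∑ l : L, R l = vZGame p X X0 Z Finset.univ) ∧
        ∀ S : Finset L, S ⊂ Finset.univ → vZGame p X X0 Z S ≤ ∑ i ∈ S, R i)
      ↔ (∀ S : Finset L,
          vZGame p X X0 Z S ≤ ∑ i ∈ S, R i ∧
          ∑ i ∈ S, R i ≤ cmi p (XS X S) X0 Z)) := by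
  have hf := vZ_formula p X X0 Z hp.1 hM
  constructor
  · intro U V
    have f1 := hf U
    have f2 := hf V
    have f3 := hf (U ∪ V)
    have f4 := hf (U ∩ V)
    rw [Finset.compl_union] at f3
    rw [Finset.compl_inter] at f4
    have s1 := ent_XS_submod X hp Uᶜ Vᶜ Z
    have s2 := ent_XS_submod X hp U V X0
    linarith
  · intro R
    have key0 : vZGame p X X0 Z ∅ = 0 := by
      rw [hf ∅, Finset.compl_empty, ent_XS_empty X X0]
      ring
    have key1 : ∀ S : Finset L, cmi p (XS X S) X0 Z
        = vZGame p X X0 Z Finset.univ - vZGame p X X0 Z Sᶜ := by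
      intro S
      rw [cmi_Z_formula p X X0 Z hp.1 hM S, hf Finset.univ, hf Sᶜ, Finset.compl_univ,
        compl_compl, ent_XS_empty X Z, I2_formula p X X0 Z hp.1 hM S]
      ring
    constructor
    · rintro ⟨hsum, hlb⟩ S
      have hsplit : ∑ i ∈ S, R i + ∑ i ∈ Sᶜ, R i = ∑ l : L, R l :=
        Finset.sum_add_sum_compl S R
      have hcompl : vZGame p X X0 Z Sᶜ ≤ ∑ i ∈ Sᶜ, R i := by
        by_cases hS : Sᶜ = Finset.univ
        · rw [hS]; exact le_of_eq hsum.symm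
        · exact hlb Sᶜ (Finset.ssubset_univ_iff.2 hS)
      constructor
      · by_cases hS : S = Finset.univ
        · rw [hS]; exact le_of_eq hsum.symm
        · exact hlb S (Finset.ssubset_univ_iff.2 hS)
      · rw [key1 S]
        linarith
    · intro h
      refine ⟨?_, fun S _ => (h S).1⟩
      have h1 := (h Finset.univ).1
      have h2 := (h Finset.univ).2
      rw [key1 Finset.univ, Finset.compl_univ, key0] at h2
      linarith
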